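/- Fix an integer m ≥ 2. For each positive integer q let S_q = {x_0 < x_1 < … < x_{T(q)−1}} ⊆ Z_q be a subset of size T(q) satisfying T(q) = (1 − 2^{−1/(m−1)})·q + o(q) and C(S_q, q, m) = o(T(q)) as q → ∞, and let (t_n) be the binary sequence with t_n = 1 if 1 ≤ x_{n+1} − x_n ≤ m−1 and t_n = 0 otherwise, n = 0,…,T(q)−2. Then for each v ∈ {0,1} the number N^{(v)}(t_n) of indices n with t_n = v satisfies N^{(v)}(t_n) = (1/2 + o(1))·T(q) as q → ∞; that is, (t_n) is asymptotically balanced. -/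
import Mathlib


open Finset Filter

/-- The function `f_R` from the paper: `1 - |R|/q` on `R`, `-|R|/q` off `R`. -/
noncomputable def fsub (q : ℕ) (R : Finset ℕ) (n : ℕ) : ℝ :=
  if n % q ∈ R then 1 - (R.card : ℝ) / q else -((R.card : ℝ) / q)

/-- The correlation measure `C_k(R,q)` of order `k` of a subset `R ⊆ Z_q`. -/
noncomputable def corrK (R : Finset ℕ) (q k : ℕ) : ℝ :=
  sSup {x : ℝ | ∃ (M : ℕ) (d : Fin k → ℕ), 1 ≤ M ∧ M ≤ q ∧ StrictMono d ∧
    (∀ i, d i ≤ q - 1) ∧ x = |∑ n ∈ Finset.range M, ∏ i, fsub q R (n + d i)|}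

/-- `C(R,q,s) = max_{1 ≤ k ≤ s} C_k(R,q)`. -/
noncomputable def corrMeasure (R : Finset ℕ) (q s : ℕ) : ℝ :=
  sSup {x : ℝ | ∃ k, 1 ≤ k ∧ k ≤ s ∧ x = corrK R q k}


lemma abs_fsub_le (q : ℕ) (R : Finset ℕ) (hR : R.card ≤ q) (n : ℕ) :
    |fsub q R n| ≤ 1 := by
  have h0 : (0:ℝ) ≤ (R.card : ℝ) / q := by positivity
  have h1 : (R.card : ℝ) / q ≤ 1 := by
    rcases Nat.eq_zero_or_pos q with h | h
    · simp [h]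
    · rw [div_le_one (by exact_mod_cast h)]; exact_mod_cast hR
  unfold fsub
  split <;> rw [abs_le] <;> constructor <;> linarith

lemma sum_prod_fsub_le (q M k : ℕ) (R : Finset ℕ) (hR : R.card ≤ q) (hM : M ≤ q)
    (d : Fin k → ℕ) :
    |∑ n ∈ Finset.range M, ∏ i, fsub q R (n + d i)| ≤ q := by
  calc |∑ n ∈ Finset.range M, ∏ i, fsub q R (n + d i)|
      ≤ ∑ n ∈ Finset.range M, |∏ i, fsub q R (n + d i)| := Finset.abs_sum_le_sum_abs _ _
    _ ≤ ∑ _n ∈ Finset.range M, 1 := by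
        refine Finset.sum_le_sum fun n _ => ?_
        rw [Finset.abs_prod]
        exact Finset.prod_le_one (fun i _ => abs_nonneg _) (fun i _ => abs_fsub_le q R hR _)
    _ = M := by simp
    _ ≤ q := by exact_mod_cast hM

lemma corrK_le (q k : ℕ) (R : Finset ℕ) (hR : R.card ≤ q) : corrK R q k ≤ q := by
  apply Real.sSup_le
  · rintro x ⟨M, d, _hM1, hMq, _hd, _hdq, rfl⟩
    exact sum_prod_fsub_le q M k R hR hMq d
  · positivity

lemma corrK_le_corrMeasure (q s k : ℕ) (R : Finset ℕ) (hR : R.card ≤ q)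
    (hk1 : 1 ≤ k) (hks : k ≤ s) : corrK R q k ≤ corrMeasure R q s := by
  apply le_csSup
  · exact ⟨q, by rintro x ⟨k', _h1, _h2, rfl⟩; exact corrK_le q k' R hR⟩
  · exact ⟨k, hk1, hks, rfl⟩

lemma le_corrK (q k M : ℕ) (R : Finset ℕ) (hR : R.card ≤ q) (d : Fin k → ℕ)
    (hM1 : 1 ≤ M) (hMq : M ≤ q) (hd : StrictMono d) (hdq : ∀ i, d i ≤ q - 1) :
    |∑ n ∈ Finset.range M, ∏ i, fsub q R (n + d i)| ≤ corrK R q k := by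
  apply le_csSup
  · exact ⟨q, by rintro y ⟨M', d', _h1, h2, _h3, _h4, rfl⟩; exact sum_prod_fsub_le q M' k R hR h2 d'⟩
  · exact ⟨M, d, hM1, hMq, hd, hdq, rfl⟩

lemma corr_D_le (q m : ℕ) (R : Finset ℕ) (hR : R.card ≤ q) (hq : 1 ≤ q)
    (D : Finset ℕ) (hD : D.Nonempty) (hcard : D.card ≤ m)
    (hel : ∀ j ∈ D, j ≤ q - 1) :
    |∑ y ∈ Finset.range q, ∏ j ∈ D, fsub q R (y + j)| ≤ corrMeasure R q m := by
  set k := D.card with hk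
  set d : Fin k → ℕ := fun i => D.orderEmbOfFin rfl i with hdd
  have hmono : StrictMono d := (D.orderEmbOfFin rfl).strictMono
  have hmem : ∀ i, d i ∈ D := fun i => D.orderEmbOfFin_mem rfl i
  have him : Finset.image d Finset.univ = D := by
    apply Finset.eq_of_subset_of_card_le
    · intro j hj
      simp only [Finset.mem_image] at hj
      obtain ⟨i, _, rfl⟩ := hj; exact hmem i
    · rw [Finset.card_image_of_injective _ hmono.injective]; simp [hk]
  have hprod : ∀ y, ∏ j ∈ D, fsub q R (y + j) = ∏ i, fsub q R (y + d i) := by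
    intro y
    rw [← him, Finset.prod_image (fun a _ b _ h => hmono.injective h)]
  have h1 := le_corrK q k q R hR d hq le_rfl hmono (fun i => hel _ (hmem i))
  calc |∑ y ∈ Finset.range q, ∏ j ∈ D, fsub q R (y + j)|
      = |∑ n ∈ Finset.range q, ∏ i, fsub q R (n + d i)| := by simp_rw [hprod]
    _ ≤ corrK R q k := h1
    _ ≤ corrMeasure R q m := corrK_le_corrMeasure q m k R hR hD.card_pos hcard

lemma key_bound (m q T : ℕ) (x : ℕ → ℕ) (hm : 2 ≤ m) (hq : m ≤ q) (hT1 : 1 ≤ T)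
    (hmono : ∀ i j, i < j → j < T → x i < x j)
    (hrange : ∀ i, i < T → x i < q) :
    |(((Finset.range (T - 1)).filter
        (fun n => ¬(1 ≤ x (n + 1) - x n ∧ x (n + 1) - x n ≤ m - 1))).card : ℝ)
      - (T : ℝ) * (1 - (T : ℝ) / q) ^ (m - 1)|
      ≤ 2 ^ m * corrMeasure ((Finset.range T).image x) q m + 1 := by
  have hq1 : 1 ≤ q := le_trans (by omega : 1 ≤ m) hq
  have hq0 : (q : ℝ) ≠ 0 := by positivity
  set S : Finset ℕ := (Finset.range T).image x with hS
  -- injectivity and card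
  have hinj : ∀ i ∈ Finset.range T, ∀ j ∈ Finset.range T, x i = x j → i = j := by
    intro i hi j hj hij
    simp only [Finset.mem_range] at hi hj
    by_contra hne
    rcases Nat.lt_or_ge i j with h | h
    · exact absurd hij (Nat.ne_of_lt (hmono i j h hj))
    · have : j < i := by omega
      exact absurd hij.symm (Nat.ne_of_lt (hmono j i this hi))
  have hcardS : S.card = T := by
    rw [hS, Finset.card_image_of_injOn hinj, Finset.card_range]
  have hSsub : S ⊆ Finset.range q := by
    intro a ha
    rw [hS, Finset.mem_image] at ha
    obtain ⟨i, hi, rfl⟩ := ha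
    exact Finset.mem_range.mpr (hrange i (Finset.mem_range.mp hi))
  have hTq : T ≤ q := by
    have := Finset.card_le_card hSsub
    rwa [hcardS, Finset.card_range] at this
  set δ : ℝ := (T : ℝ) / q with hδ
  have hδ0 : 0 ≤ δ := by positivity
  have hδ1 : δ ≤ 1 := by
    rw [hδ, div_le_one (by positivity)]; exact_mod_cast hTq
  set f : ℕ → ℝ := fsub q S with hf
  set e : ℕ → ℝ := fun y => if y % q ∈ S then (1:ℝ) else 0 with he
  have hfe : ∀ y, f y = e y - δ := by
    intro y
    show fsub q S y = (if y % q ∈ S then (1:ℝ) else 0) - δ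
    rw [fsub, hcardS]
    by_cases h : y % q ∈ S
    · rw [if_pos h, if_pos h, hδ]
    · rw [if_neg h, if_neg h, hδ]; ring
  have he01 : ∀ y, 0 ≤ e y ∧ e y ≤ 1 := by
    intro y
    show (0:ℝ) ≤ (if y % q ∈ S then (1:ℝ) else 0) ∧ (if y % q ∈ S then (1:ℝ) else 0) ≤ 1
    split <;> norm_num
  set G : ℕ → ℝ := fun y => ∏ j ∈ Finset.Icc 1 (m-1), (1 - e (y + j)) with hG
  have hG01 : ∀ y, 0 ≤ G y ∧ G y ≤ 1 := by
    intro y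
    constructor
    · exact Finset.prod_nonneg fun j _ => by linarith [(he01 (y+j)).2]
    · exact Finset.prod_le_one (fun j _ => by linarith [(he01 (y+j)).2])
        (fun j _ => by linarith [(he01 (y+j)).1])
  -- membership characterization of S
  have hmemS : ∀ a, a ∈ S ↔ ∃ i, i < T ∧ x i = a := by
    intro a
    rw [hS, Finset.mem_image]
    constructor
    · rintro ⟨i, hi, rfl⟩; exact ⟨i, Finset.mem_range.mp hi, rfl⟩
    · rintro ⟨i, hi, rfl⟩; exact ⟨i, Finset.mem_range.mpr hi, rfl⟩
  -- Step 1: counting identity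
  have hcount : (((Finset.range (T - 1)).filter
      (fun n => ¬(1 ≤ x (n + 1) - x n ∧ x (n + 1) - x n ≤ m - 1))).card : ℝ)
      = ∑ n ∈ Finset.range (T - 1), G (x n) := by
    rw [Finset.card_filter]
    push_cast
    refine Finset.sum_congr rfl fun n hn => ?_
    have hn' : n < T - 1 := Finset.mem_range.mp hn
    have hn1 : n + 1 < T := by omega
    have hnT : n < T := by omega
    have hxlt : x n < x (n + 1) := hmono n (n+1) (Nat.lt_succ_self n) hn1
    have hxq : x (n + 1) < q := hrange (n+1) hn1
    by_cases hc : 1 ≤ x (n + 1) - x n ∧ x (n + 1) - x n ≤ m - 1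
    · rw [if_neg (by simpa using hc)]
      set g := x (n + 1) - x n with hg
      have hg1 : 1 ≤ g := hc.1
      have hgm : g ≤ m - 1 := hc.2
      have hgmem : g ∈ Finset.Icc 1 (m-1) := Finset.mem_Icc.mpr ⟨hg1, hgm⟩
      have hxn1 : x n + g = x (n+1) := by omega
      symm
      apply Finset.prod_eq_zero hgmem
      have hmod : (x n + g) % q = x (n+1) := by
        rw [hxn1]; exact Nat.mod_eq_of_lt hxq
      have : e (x n + g) = 1 := by
        rw [he]
        simp only [hmod]
        rw [if_pos ((hmemS _).mpr ⟨n+1, hn1, rfl⟩)]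
      rw [this]; ring
    · rw [if_pos hc]
      have hgap : x n + m ≤ x (n + 1) := by omega
      symm
      apply Finset.prod_eq_one
      intro j hj
      have hj' := Finset.mem_Icc.mp hj
      have hlt : x n + j < x (n + 1) := by omega
      have hltq : x n + j < q := lt_trans hlt hxq
      have hnotin : x n + j ∉ S := by
        rw [hmemS]
        rintro ⟨i, hiT, hxi⟩
        rcases Nat.lt_or_ge i (n+1) with h | h
        · have : x i ≤ x n := by
            rcases Nat.lt_or_ge i n with h2 | h2
            · exact le_of_lt (hmono i n h2 hnT)
            · have : i = n := by omega
              rw [this]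
          omega
        · have : x (n+1) ≤ x i := by
            rcases Nat.lt_or_ge (n+1) i with h2 | h2
            · exact le_of_lt (hmono (n+1) i h2 hiT)
            · have : i = n + 1 := by omega
              rw [this]
          omega
      have : e (x n + j) = 0 := by
        rw [he]
        simp only [Nat.mod_eq_of_lt hltq]
        rw [if_neg hnotin]
      rw [this]; ring
  -- Step 2: extend and reindex
  have hstep2 : ∑ n ∈ Finset.range T, G (x n)
      = ∑ n ∈ Finset.range (T-1), G (x n) + G (x (T-1)) := by
    have h : T - 1 + 1 = T := by omega
    conv_lhs => rw [← h]
    rw [Finset.sum_range_succ]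
  have hstep3 : ∑ n ∈ Finset.range T, G (x n) = ∑ a ∈ S, G a := by
    rw [hS, Finset.sum_image hinj]
  have hstep4 : ∑ a ∈ S, G a = ∑ y ∈ Finset.range q, e y * G y := by
    have h : ∀ y ∈ Finset.range q, e y * G y = if y ∈ S then G y else 0 := by
      intro y hy
      have hyq : y % q = y := Nat.mod_eq_of_lt (Finset.mem_range.mp hy)
      show (if y % q ∈ S then (1:ℝ) else 0) * G y = if y ∈ S then G y else 0
      rw [hyq]
      split <;> ring
    rw [Finset.sum_congr rfl h, Finset.sum_ite_mem, Finset.inter_eq_right.mpr hSsub]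
  have hstep5 : ∀ y, e y * G y
      = (f y + δ) * ∏ j ∈ Finset.Icc 1 (m-1), ((1-δ) - f (y+j)) := by
    intro y
    have h1 : e y = f y + δ := by rw [hfe]; ring
    have h2 : ∀ j, (1:ℝ) - e (y+j) = (1-δ) - f (y+j) := fun j => by rw [hfe]; ring
    show e y * ∏ j ∈ Finset.Icc 1 (m-1), (1 - e (y + j)) = _
    rw [h1]
    congr 1
    exact Finset.prod_congr rfl fun j _ => h2 j
  -- Step 3: expansion over subsets
  set C : ℝ := corrMeasure S q m with hCdef
  set inr : Finset ℕ → ℝ :=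
    fun D => ∑ y ∈ Finset.range q, (f y + δ) * ∏ j ∈ D, (-(f (y+j))) with hinr
  have hexpand : ∑ y ∈ Finset.range q, (f y + δ) * ∏ j ∈ Finset.Icc 1 (m-1), ((1-δ) - f (y+j))
      = ∑ D ∈ (Finset.Icc 1 (m-1)).powerset,
          inr D * (1-δ) ^ ((Finset.Icc 1 (m-1)) \ D).card := by
    have h1 : ∀ y, ∏ j ∈ Finset.Icc 1 (m-1), ((1-δ) - f (y+j))
        = ∑ D ∈ (Finset.Icc 1 (m-1)).powerset,
            (∏ j ∈ D, (-(f (y+j)))) * (1-δ) ^ ((Finset.Icc 1 (m-1)) \ D).card := by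
      intro y
      have h : ∀ j ∈ Finset.Icc 1 (m-1), (1-δ) - f (y+j) = (-(f (y+j))) + (1-δ) :=
        fun j _ => by ring
      rw [Finset.prod_congr rfl h, Finset.prod_add]
      exact Finset.sum_congr rfl fun D _ => by rw [Finset.prod_const]
    simp_rw [h1, Finset.mul_sum]
    rw [Finset.sum_comm]
    refine Finset.sum_congr rfl fun D _ => ?_
    rw [hinr]
    dsimp only
    rw [Finset.sum_mul]
    exact Finset.sum_congr rfl fun y _ => by ring
  have hSq : S.card ≤ q := by rw [hcardS]; exact hTq
  -- basic correlation bound for C ≥ 0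
  have hsum0 : |∑ y ∈ Finset.range q, f y| ≤ C := by
    have h := corr_D_le q m S hSq hq1 {0} ⟨0, Finset.mem_singleton_self 0⟩
      (by simp; omega) (by simp)
    rw [hCdef, hf]
    simpa using h
  have hC0 : 0 ≤ C := le_trans (abs_nonneg _) hsum0
  -- per-subset bound
  have hbound : ∀ D ∈ (Finset.Icc 1 (m-1)).powerset,
      |inr D - (if D = ∅ then (T:ℝ) else 0)| ≤ 2 * C := by
    intro D hD
    have hDsub := Finset.mem_powerset.mp hD
    by_cases hDe : D = ∅
    · subst hDe
      rw [if_pos rfl]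
      have h1 : inr ∅ = (∑ y ∈ Finset.range q, f y) + (q:ℝ) * δ := by
        rw [hinr]
        dsimp only
        simp only [Finset.prod_empty, mul_one]
        rw [Finset.sum_add_distrib, Finset.sum_const, Finset.card_range, nsmul_eq_mul]
      have h2 : (q:ℝ) * δ = T := by rw [hδ]; field_simp
      rw [h1, h2]
      simp only [add_sub_cancel_right]
      linarith [hsum0]
    · rw [if_neg hDe]
      have hDne : D.Nonempty := Finset.nonempty_of_ne_empty hDe
      have h0D : 0 ∉ D := fun h => by have := Finset.mem_Icc.mp (hDsub h); omega
      have hDcard : D.card ≤ m - 1 := by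
        have h := Finset.card_le_card hDsub
        rw [Nat.card_Icc] at h
        omega
      have hsign : ∀ y, ∏ j ∈ D, (-(f (y+j))) = (-1:ℝ)^D.card * ∏ j ∈ D, f (y+j) := by
        intro y
        calc ∏ j ∈ D, (-(f (y+j))) = ∏ j ∈ D, ((-1:ℝ) * f (y+j)) :=
              Finset.prod_congr rfl (fun j _ => by ring)
          _ = (∏ _j ∈ D, (-1:ℝ)) * ∏ j ∈ D, f (y+j) := Finset.prod_mul_distrib
          _ = (-1:ℝ)^D.card * ∏ j ∈ D, f (y+j) := by rw [Finset.prod_const]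
      have hins : ∀ y, f y * ∏ j ∈ D, f (y+j) = ∏ j ∈ insert 0 D, f (y+j) := by
        intro y
        rw [Finset.prod_insert h0D, add_zero]
      have hinnerD : inr D = (-1:ℝ)^D.card *
          ((∑ y ∈ Finset.range q, ∏ j ∈ insert 0 D, f (y+j))
            + δ * ∑ y ∈ Finset.range q, ∏ j ∈ D, f (y+j)) := by
        rw [hinr]
        dsimp only
        calc ∑ y ∈ Finset.range q, (f y + δ) * ∏ j ∈ D, (-(f (y+j)))
            = ∑ y ∈ Finset.range q, ((-1:ℝ)^D.card * ∏ j ∈ insert 0 D, f (y+j)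
                + (-1:ℝ)^D.card * (δ * ∏ j ∈ D, f (y+j))) := by
              refine Finset.sum_congr rfl fun y _ => ?_
              rw [hsign y, ← hins y]; ring
          _ = _ := by
              rw [Finset.sum_add_distrib, ← Finset.mul_sum, ← Finset.mul_sum, ← Finset.mul_sum]
              ring
      have hb1 : |∑ y ∈ Finset.range q, ∏ j ∈ insert 0 D, f (y+j)| ≤ C := by
        rw [hf, hCdef]
        refine corr_D_le q m S hSq hq1 _ ⟨0, Finset.mem_insert_self 0 D⟩ ?_ ?_
        · rw [Finset.card_insert_of_notMem h0D]; omega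
        · intro j hj
          rcases Finset.mem_insert.mp hj with rfl | hj
          · omega
          · have := Finset.mem_Icc.mp (hDsub hj); omega
      have hb2 : |∑ y ∈ Finset.range q, ∏ j ∈ D, f (y+j)| ≤ C := by
        rw [hf, hCdef]
        refine corr_D_le q m S hSq hq1 _ hDne (by omega) ?_
        intro j hj; have := Finset.mem_Icc.mp (hDsub hj); omega
      rw [hinnerD, sub_zero, abs_mul, abs_pow, abs_neg, abs_one, one_pow, one_mul]
      refine le_trans (abs_add_le _ _) ?_
      rw [abs_mul, abs_of_nonneg hδ0]
      nlinarith [abs_nonneg (∑ y ∈ Finset.range q, ∏ j ∈ D, f (y+j)),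
        mul_nonneg (by linarith : (0:ℝ) ≤ 1 - δ)
          (abs_nonneg (∑ y ∈ Finset.range q, ∏ j ∈ D, f (y+j)))]
  -- main estimate
  have hmain : |(∑ y ∈ Finset.range q, e y * G y) - (T:ℝ) * (1-δ)^(m-1)| ≤ 2^m * C := by
    have hw01 : ∀ D : Finset ℕ, 0 ≤ (1-δ) ^ ((Finset.Icc 1 (m-1)) \ D).card ∧
        (1-δ) ^ ((Finset.Icc 1 (m-1)) \ D).card ≤ 1 := by
      intro D
      exact ⟨pow_nonneg (by linarith) _, pow_le_one₀ (by linarith) (by linarith)⟩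
    have h1 : ∑ y ∈ Finset.range q, e y * G y
        = ∑ D ∈ (Finset.Icc 1 (m-1)).powerset,
            inr D * (1-δ) ^ ((Finset.Icc 1 (m-1)) \ D).card := by
      rw [Finset.sum_congr rfl (fun y _ => hstep5 y), hexpand]
    have h2 : (T:ℝ) * (1-δ)^(m-1)
        = ∑ D ∈ (Finset.Icc 1 (m-1)).powerset,
            (if D = ∅ then (T:ℝ) else 0) * (1-δ) ^ ((Finset.Icc 1 (m-1)) \ D).card := by
      have h3 : ∀ D ∈ (Finset.Icc 1 (m-1)).powerset,
          (if D = ∅ then (T:ℝ) else 0) * (1-δ) ^ ((Finset.Icc 1 (m-1)) \ D).card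
          = if D = ∅ then (T:ℝ) * (1-δ) ^ ((Finset.Icc 1 (m-1)) \ D).card else 0 := by
        intro D _
        split <;> simp
      rw [Finset.sum_congr rfl h3, Finset.sum_ite_eq' _ ∅
        (fun D => (T:ℝ) * (1-δ) ^ ((Finset.Icc 1 (m-1)) \ D).card)]
      rw [if_pos (Finset.empty_mem_powerset _)]
      congr 1
      have hmm1 : m - 1 + 1 - 1 = m - 1 := by omega
      rw [Finset.sdiff_empty, Nat.card_Icc, hmm1]
    rw [h1, h2, ← Finset.sum_sub_distrib]
    refine le_trans (Finset.abs_sum_le_sum_abs _ _) ?_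
    have hper : ∀ D ∈ (Finset.Icc 1 (m-1)).powerset,
        |inr D * (1-δ) ^ ((Finset.Icc 1 (m-1)) \ D).card
          - (if D = ∅ then (T:ℝ) else 0) * (1-δ) ^ ((Finset.Icc 1 (m-1)) \ D).card|
          ≤ 2 * C := by
      intro D hD
      rw [← sub_mul, abs_mul, abs_of_nonneg (hw01 D).1]
      calc |inr D - if D = ∅ then (T:ℝ) else 0| * (1-δ) ^ ((Finset.Icc 1 (m-1)) \ D).card
          ≤ |inr D - if D = ∅ then (T:ℝ) else 0| * 1 :=
            mul_le_mul_of_nonneg_left (hw01 D).2 (abs_nonneg _)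
        _ = |inr D - if D = ∅ then (T:ℝ) else 0| := mul_one _
        _ ≤ 2 * C := hbound D hD
    refine le_trans (Finset.sum_le_sum hper) ?_
    rw [Finset.sum_const, Finset.card_powerset, Nat.card_Icc, nsmul_eq_mul]
    have hmm : m - 1 + 1 - 1 = m - 1 := by omega
    rw [hmm]
    have h2m : (2:ℝ)^(m-1) * 2 = 2^m := by
      rw [← pow_succ]
      congr 1
      omega
    push_cast
    nlinarith [h2m]
  -- final assembly
  have hG1 : |G (x (T-1))| ≤ 1 := by
    rw [abs_of_nonneg (hG01 _).1]; exact (hG01 _).2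
  rw [hcount]
  have heq : ∑ n ∈ Finset.range (T-1), G (x n)
      = (∑ y ∈ Finset.range q, e y * G y) - G (x (T-1)) := by
    rw [← hstep4, ← hstep3, hstep2]; ring
  rw [heq]
  calc |(∑ y ∈ Finset.range q, e y * G y) - G (x (T-1)) - (T:ℝ)*(1-δ)^(m-1)|
      = |((∑ y ∈ Finset.range q, e y * G y) - (T:ℝ)*(1-δ)^(m-1)) - G (x (T-1))| := by
        rw [sub_right_comm]
    _ ≤ |(∑ y ∈ Finset.range q, e y * G y) - (T:ℝ)*(1-δ)^(m-1)| + |G (x (T-1))| :=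
        abs_sub _ _
    _ ≤ 2^m * C + 1 := add_le_add hmain hG1


theorem statement4 (m : ℕ) (hm : 2 ≤ m) (T : ℕ → ℕ) (x : ℕ → ℕ → ℕ)
    (hmono : ∀ q i j, i < j → j < T q → x q i < x q j)
    (hrange : ∀ q i, i < T q → x q i < q)
    (hT : Filter.Tendsto (fun q : ℕ => (T q : ℝ) / q) Filter.atTop
      (nhds (1 - (2 : ℝ) ^ (-(1 / ((m : ℝ) - 1))))))
    (hC : Filter.Tendsto
      (fun q : ℕ => corrMeasure ((Finset.range (T q)).image (x q)) q m / T q)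
      Filter.atTop (nhds 0)) :
    ∀ v : ℕ, v ≤ 1 →
      Filter.Tendsto
        (fun q : ℕ => (((Finset.range (T q - 1)).filter
            (fun n => (if 1 ≤ x q (n + 1) - x q n ∧ x q (n + 1) - x q n ≤ m - 1
              then 1 else 0) = v)).card : ℝ) / T q)
        Filter.atTop (nhds (1 / 2)) := by
  have hm1 : (1:ℝ) ≤ (m:ℝ) - 1 := by
    have h2 : (2:ℝ) ≤ m := by exact_mod_cast hm
    linarith
  set c : ℝ := (2:ℝ) ^ (-(1 / ((m : ℝ) - 1))) with hc
  have hc0 : 0 < c := Real.rpow_pos_of_pos (by norm_num) _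
  have hc1 : c < 1 := by
    apply Real.rpow_lt_one_of_one_lt_of_neg (by norm_num)
    have h : 0 < 1 / ((m:ℝ)-1) := by positivity
    linarith
  have hcpow : c ^ (m - 1) = 1 / 2 := by
    rw [hc, ← Real.rpow_natCast ((2:ℝ) ^ (-(1 / ((m : ℝ) - 1)))) (m-1),
      ← Real.rpow_mul (by norm_num : (0:ℝ) ≤ 2)]
    have hcast : ((m - 1 : ℕ) : ℝ) = (m:ℝ) - 1 := by
      rw [Nat.cast_sub (by omega : 1 ≤ m)]
      norm_num
    rw [hcast]
    have hexp : -(1 / ((m:ℝ)-1)) * ((m:ℝ)-1) = -1 := by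
      field_simp
    rw [hexp, Real.rpow_neg_one]
    norm_num
  have hTtop : Tendsto (fun q : ℕ => (T q : ℝ)) atTop atTop := by
    have h1 : Tendsto (fun q : ℕ => ((T q : ℝ)/q) * q) atTop atTop :=
      Filter.Tendsto.pos_mul_atTop (by linarith : (0:ℝ) < 1 - c) hT tendsto_natCast_atTop_atTop
    apply h1.congr'
    filter_upwards [eventually_ge_atTop 1] with q hq
    have hq0 : (q:ℝ) ≠ 0 := by positivity
    field_simp
  have hTev : ∀ N : ℕ, ∀ᶠ q in atTop, N ≤ T q := by
    intro N
    filter_upwards [hTtop.eventually_ge_atTop (N:ℝ)] with q hq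
    exact_mod_cast hq
  have hpow : Tendsto (fun q : ℕ => (1 - (T q:ℝ)/q) ^ (m-1)) atTop (nhds (1/2)) := by
    have h1 : Tendsto (fun q : ℕ => 1 - (T q:ℝ)/q) atTop (nhds c) := by
      have h := (tendsto_const_nhds (x := (1:ℝ)) (f := atTop)).sub hT
      have heq : (1:ℝ) - (1 - c) = c := by ring
      rwa [heq] at h
    have h2 := h1.pow (m-1)
    rwa [hcpow] at h2
  have hErr : Tendsto (fun q : ℕ =>
      ((2:ℝ)^m * corrMeasure ((Finset.range (T q)).image (x q)) q m + 1) / T q)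
      atTop (nhds 0) := by
    have h2 := hC.const_mul ((2:ℝ)^m)
    have h3 : Tendsto (fun q : ℕ => 1 / (T q : ℝ)) atTop (nhds 0) :=
      tendsto_const_nhds.div_atTop hTtop
    have h4 := h2.add h3
    have h5 : (2:ℝ)^m * 0 + 0 = 0 := by ring
    rw [h5] at h4
    apply h4.congr
    intro q
    ring
  have hN0 : Tendsto (fun q : ℕ => (((Finset.range (T q - 1)).filter
      (fun n => ¬(1 ≤ x q (n + 1) - x q n ∧ x q (n + 1) - x q n ≤ m - 1))).card : ℝ) / T q)
      atTop (nhds (1/2)) := by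
    have hg : Tendsto (fun q : ℕ => (((Finset.range (T q - 1)).filter
        (fun n => ¬(1 ≤ x q (n + 1) - x q n ∧ x q (n + 1) - x q n ≤ m - 1))).card : ℝ) / T q
        - (1 - (T q:ℝ)/q) ^ (m-1)) atTop (nhds 0) := by
      refine squeeze_zero_norm' ?_ hErr
      filter_upwards [hTev 1, eventually_ge_atTop m] with q hq1 hqm
      have hkb := key_bound m q (T q) (x q) hm hqm hq1
        (fun i j h1 h2 => hmono q i j h1 h2) (fun i h => hrange q i h)
      have hTpos : (0:ℝ) < T q := by exact_mod_cast hq1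
      have heq2 : (((Finset.range (T q - 1)).filter
          (fun n => ¬(1 ≤ x q (n + 1) - x q n ∧ x q (n + 1) - x q n ≤ m - 1))).card : ℝ) / T q
          - (1 - (T q:ℝ)/q) ^ (m-1)
          = ((((Finset.range (T q - 1)).filter
          (fun n => ¬(1 ≤ x q (n + 1) - x q n ∧ x q (n + 1) - x q n ≤ m - 1))).card : ℝ)
            - (T q:ℝ) * (1 - (T q:ℝ)/q) ^ (m-1)) / T q := by
        field_simp
      rw [Real.norm_eq_abs, heq2, abs_div, abs_of_pos hTpos]
      exact (div_le_div_iff_of_pos_right hTpos).mpr hkb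
    have h6 := hg.add hpow
    have h7 : (0:ℝ) + 1/2 = 1/2 := by ring
    rw [h7] at h6
    apply h6.congr
    intro q
    ring
  intro v hv
  interval_cases v
  · -- v = 0
    have hfeq : ∀ q : ℕ, (Finset.range (T q - 1)).filter
        (fun n => (if 1 ≤ x q (n+1) - x q n ∧ x q (n+1) - x q n ≤ m - 1 then 1 else 0) = 0)
        = (Finset.range (T q - 1)).filter
        (fun n => ¬(1 ≤ x q (n+1) - x q n ∧ x q (n+1) - x q n ≤ m - 1)) := by
      intro q
      apply Finset.filter_congr
      intro n _
      by_cases hcond : 1 ≤ x q (n+1) - x q n ∧ x q (n+1) - x q n ≤ m - 1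
      · simp [hcond]
      · simp [hcond]
    have heq3 : (fun q : ℕ => (((Finset.range (T q - 1)).filter
        (fun n => (if 1 ≤ x q (n + 1) - x q n ∧ x q (n + 1) - x q n ≤ m - 1
          then 1 else 0) = 0)).card : ℝ) / T q)
        = (fun q : ℕ => (((Finset.range (T q - 1)).filter
        (fun n => ¬(1 ≤ x q (n + 1) - x q n ∧ x q (n + 1) - x q n ≤ m - 1))).card : ℝ) / T q) := by
      funext q
      rw [hfeq q]
    rw [heq3]
    exact hN0
  · -- v = 1
    have hfeq : ∀ q : ℕ, (Finset.range (T q - 1)).filter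
        (fun n => (if 1 ≤ x q (n+1) - x q n ∧ x q (n+1) - x q n ≤ m - 1 then 1 else 0) = 1)
        = (Finset.range (T q - 1)).filter
        (fun n => (1 ≤ x q (n+1) - x q n ∧ x q (n+1) - x q n ≤ m - 1)) := by
      intro q
      apply Finset.filter_congr
      intro n _
      by_cases hcond : 1 ≤ x q (n+1) - x q n ∧ x q (n+1) - x q n ≤ m - 1
      · simp [hcond]
      · simp [hcond]
    have hsplit : ∀ q : ℕ, (((Finset.range (T q - 1)).filter
        (fun n => (1 ≤ x q (n+1) - x q n ∧ x q (n+1) - x q n ≤ m - 1))).card : ℝ)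
        = ((T q - 1 : ℕ) : ℝ) - (((Finset.range (T q - 1)).filter
        (fun n => ¬(1 ≤ x q (n+1) - x q n ∧ x q (n+1) - x q n ≤ m - 1))).card : ℝ) := by
      intro q
      have h := Finset.card_filter_add_card_filter_not
        (s := Finset.range (T q - 1))
        (p := fun n => (1 ≤ x q (n+1) - x q n ∧ x q (n+1) - x q n ≤ m - 1))
      rw [Finset.card_range] at h
      have h' : ((((Finset.range (T q - 1)).filter
          (fun n => (1 ≤ x q (n+1) - x q n ∧ x q (n+1) - x q n ≤ m - 1))).card : ℝ)
          + (((Finset.range (T q - 1)).filter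
          (fun n => ¬(1 ≤ x q (n+1) - x q n ∧ x q (n+1) - x q n ≤ m - 1))).card : ℝ))
          = ((T q - 1 : ℕ) : ℝ) := by exact_mod_cast congrArg (Nat.cast (R := ℝ)) h
      linarith
    have hfrac : Tendsto (fun q : ℕ => ((T q - 1 : ℕ):ℝ)/T q) atTop (nhds 1) := by
      have h1 : Tendsto (fun q : ℕ => 1 - 1/(T q:ℝ)) atTop (nhds 1) := by
        have h2 := (tendsto_const_nhds (x := (1:ℝ)) (f := atTop)).sub
          (tendsto_const_nhds.div_atTop hTtop (f := fun _ => (1:ℝ)))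
        have h3 : (1:ℝ) - 0 = 1 := by ring
        rwa [h3] at h2
      apply h1.congr'
      filter_upwards [hTev 1] with q hq
      have hT0 : (T q : ℝ) ≠ 0 := by positivity
      rw [Nat.cast_sub hq]
      push_cast
      field_simp
    have h8 := hfrac.sub hN0
    have h9 : (1:ℝ) - 1/2 = 1/2 := by norm_num
    rw [h9] at h8
    apply h8.congr
    intro q
    rw [hfeq q, hsplit q]
    ring
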